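/- arXiv:2003.05749 — 2 statements merged into one kernel-verified Lean document; each statement's English description precedes it below -/
import Mathlib

section
/- Let α, β ∈ ℝ and η ∈ {1, −1}. Then (𝔤₄, g, J) is a first kind algebraic Wanas soliton associated to the canonical connection ∇⁰ if and only if one of the following holds: (i) α = β = 0, c = −4, with De₁ = 0, De₂ = e₂ + ηe₃, De₃ = 2e₃; (ii) α = 0, β = η, c = −1, with De₁ = 0, De₂ = −e₂ + ηe₃, De₃ = −ηe₂ + e₃. -/
noncomputable section

/-- The underlying vector space `ℝ³`. -/
abbrev V : Type := Fin 3 → ℝ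

/-- The basis vector `e₁`. -/
def e1 : V := ![1, 0, 0]

/-- The basis vector `e₂`. -/
def e2 : V := ![0, 1, 0]

/-- The basis vector `e₃`. -/
def e3 : V := ![0, 0, 1]

/-- The Lorentzian metric `g` with `g(e₁,e₁) = g(e₂,e₂) = 1`, `g(e₃,e₃) = -1`. -/
def g (x y : V) : ℝ := x 0 * y 0 + x 1 * y 1 - x 2 * y 2

/-- The Lie bracket. -/
def br (α β η : ℝ) (x y : V) : V :=
  (x 0 * y 1 - x 1 * y 0) • (-e2 + (2 * η - β) • e3) + (x 0 * y 2 - x 2 * y 0) • (-(β • e2) + e3) +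
    (x 1 * y 2 - x 2 * y 1) • (α • e1)

/-- The canonical connection `∇⁰`. -/
def nab (α β η : ℝ) (x y : V) : V :=
  (x 1 * y 0) • e2 + (x 1 * y 1) • (-e1) + (x 2 * y 0) • ((α / 2 + η) • e2) +
    (x 2 * y 1) • (-((α / 2 + η) • e1))

/-- The torsion `T⁰(X,Y) = ∇⁰_X Y - ∇⁰_Y X - [X,Y]`. -/
def T (α β η : ℝ) (x y : V) : V := nab α β η x y - nab α β η y x - br α β η x y

/-- The tensor `A⁰(X,Y)Z = T⁰(T⁰(X,Y),Z)`. -/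
def A (α β η : ℝ) (x y z : V) : V := T α β η (T α β η x y) z

/-- The curvature `R⁰(X,Y)Z = ∇⁰_X ∇⁰_Y Z - ∇⁰_Y ∇⁰_X Z - ∇⁰_{[X,Y]} Z`. -/
def Rc (α β η : ℝ) (x y z : V) : V :=
  nab α β η x (nab α β η y z) - nab α β η y (nab α β η x z) - nab α β η (br α β η x y) z

/-- The Wanas tensor `W⁰(X,Y)Z = R⁰(X,Y)Z - A⁰(X,Y)Z`. -/
def W (α β η : ℝ) (x y z : V) : V := Rc α β η x y z - A α β η x y z

/-- `w⁰(X,Y) = -g(W⁰(X,e₁)Y,e₁) - g(W⁰(X,e₂)Y,e₂) + g(W⁰(X,e₃)Y,e₃)`. -/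
def w (α β η : ℝ) (x y : V) : ℝ :=
  -g (W α β η x e1 y) e1 - g (W α β η x e2 y) e2 + g (W α β η x e3 y) e3

/-- `w̃⁰(X,Y) = (w⁰(X,Y) + w⁰(Y,X))/2`. -/
def wt (α β η : ℝ) (x y : V) : ℝ := (w α β η x y + w α β η y x) / 2

/-- `D` is a derivation of the Lie algebra. -/
def IsDeriv (α β η : ℝ) (D : V →ₗ[ℝ] V) : Prop :=
  ∀ x y, D (br α β η x y) = br α β η (D x) y + br α β η x (D y)

lemma wx1 (α β η : ℝ) (x : V) : w α β η x e1 =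
    x 0 * (-2 - 2*η^2 + 5*β*η - 2*β^2 - α*η + α*β/2) := by
  simp [w, W, Rc, A, T, nab, br, g, e1, e2, e3]; ring

lemma wx2 (α β η : ℝ) (x : V) : w α β η x e2 =
    x 1 * (-1 - 2*η^2 + β*η + 3*α*η - 3*α*β/2) + x 2 * (α - β) := by
  simp [w, W, Rc, A, T, nab, br, g, e1, e2, e3]; ring

lemma wx3 (α β η : ℝ) (x : V) : w α β η x e3 =
    x 1 * (α/2 - η) + x 2 * (2*η^2 - 2*β*η + α*β - α^2/2) := by
  simp [w, W, Rc, A, T, nab, br, g, e1, e2, e3]; ring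

lemma cases_lemma (u v c : ℝ)
    (E1 : -4 - c + 4*v - v^2 + u - u*v = 0)
    (E2 : 8 + 2*c - 13*v - v*c + 8*v^2 - 2*v^3 - 3*u + 2*u*v + u^2 - u^2*v/2 = 0)
    (E3 : -5*v - v*c + 6*v^2 - 2*v^3 + 2*u - 4*u*v + u*v^2 + u^2*v/2 = 0)
    (E5 : u + u*c + 2*u*v - 2*u*v^2 - 4*u^2 + 3*u^2*v - u^3/2 = 0) :
    (u = 0 ∧ v = 0 ∧ c = -4) ∨ (u = 0 ∧ v = 1 ∧ c = -1) := by
  have hc : c = -4 + 4*v - v^2 + u - u*v := by linarith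
  subst hc
  have hP : u*(1-v)*(u+v-3) = 0 := by linear_combination E2 - E3
  have hQ : v*(1-v)^2 - u*(-1-v+v^2) - u^2 + u^2*v/2 = 0 := by linear_combination -E2
  have hV : u*(3*(1-v)^2 + u*(3-2*v) + u^2/2) = 0 := by linear_combination -E5
  rcases mul_eq_zero.mp hP with h | h3
  · rcases mul_eq_zero.mp h with hu | hv1
    · subst hu
      have hvv : v*(1-v)^2 = 0 := by linear_combination hQ
      rcases mul_eq_zero.mp hvv with hv | hv
      · left; refine ⟨rfl, hv, by rw [hv]; ring⟩
      · have hv : v = 1 := by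
          have := pow_eq_zero_iff (n := 2) (by norm_num) |>.mp hv
          linarith
        right; refine ⟨rfl, hv, by rw [hv]; ring⟩
    · have hv : v = 1 := by linarith
      subst hv
      have h1 : u*(u-2) = 0 := by linear_combination -2*hQ
      have h2 : u^2*(u+2) = 0 := by linear_combination 2*hV
      rcases mul_eq_zero.mp h1 with hu | hu
      · right; refine ⟨hu, rfl, by rw [hu]; ring⟩
      · have hu2 : u = 2 := by linarith
        rw [hu2] at h2; norm_num at h2
  · have hu3 : u = 3 - v := by linarith
    subst hu3
    have hfac : (3-v) * (3*(1-v)^2 + (3-v)*(3-2*v) + (3-v)^2/2) = 0 := by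
      linear_combination hV
    have hpos : 3*(1-v)^2 + (3-v)*(3-2*v) + (3-v)^2/2 > 0 := by
      nlinarith [sq_nonneg (v - 18/11)]
    have hv3 : v = 3 := by
      rcases mul_eq_zero.mp hfac with h | h
      · linarith
      · linarith
    rw [hv3] at hQ; norm_num at hQ
set_option maxHeartbeats 2000000 in
theorem g4_first_kind_algebraic_Wanas_soliton (α β η : ℝ) (hη : η = 1 ∨ η = -1)
    (Wan : V →ₗ[ℝ] V) (hWan : ∀ x y, w α β η x y = g (Wan x) y)
    (c : ℝ) (D : V →ₗ[ℝ] V) :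
    (IsDeriv α β η D ∧ ∀ x, Wan x = c • x + D x) ↔
      (α = 0 ∧ β = 0 ∧ c = -4 ∧
        D e1 = 0 ∧ D e2 = e2 + η • e3 ∧ D e3 = (2 : ℝ) • e3) ∨
      (α = 0 ∧ β = η ∧ c = -1 ∧
        D e1 = 0 ∧ D e2 = -e2 + η • e3 ∧ D e3 = -(η • e2) + e3) := by
  have keyWan : ∀ x : V, Wan x = ![w α β η x e1, w α β η x e2, -(w α β η x e3)] := by
    intro x
    have h1 := hWan x e1; have h2 := hWan x e2; have h3 := hWan x e3
    simp only [g, e1, e2, e3, Matrix.cons_val_zero, Matrix.cons_val_one, Matrix.head_cons,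
      Matrix.cons_val_two, Matrix.tail_cons, mul_one, mul_zero, add_zero, zero_add,
      sub_zero, zero_sub] at h1 h2 h3
    funext i
    fin_cases i <;>
      simp [e1, e2, e3, Matrix.cons_val_zero, Matrix.cons_val_one, Matrix.head_cons,
        Matrix.cons_val_two, Matrix.tail_cons] <;> linarith
  have hxbasis : ∀ x : V, x = x 0 • e1 + x 1 • e2 + x 2 • e3 := by
    intro x; funext i; fin_cases i <;> simp [e1, e2, e3]
  constructor
  · rintro ⟨hder, hsol⟩
    have hDval : ∀ x : V, D x = ![w α β η x e1 - c * x 0, w α β η x e2 - c * x 1,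
        -(w α β η x e3) - c * x 2] := by
      intro x
      have h := hsol x
      rw [keyWan x] at h
      funext i
      have hi := congrFun h i
      fin_cases i <;> simp at hi ⊢ <;> linarith
    have finish1 : α = 0 → β = 0 → c = -4 →
        D e1 = 0 ∧ D e2 = e2 + η • e3 ∧ D e3 = (2 : ℝ) • e3 := by
      rintro rfl rfl rfl
      rcases hη with rfl | rfl <;>
        refine ⟨?_, ?_, ?_⟩ <;> funext i <;> fin_cases i <;>
          simp only [hDval, wx1, wx2, wx3] <;> simp [e1, e2, e3] <;> norm_num
    have finish2 : α = 0 → β = η → c = -1 →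
        D e1 = 0 ∧ D e2 = -e2 + η • e3 ∧ D e3 = -(η • e2) + e3 := by
      rintro rfl rfl rfl
      rcases hη with rfl | rfl <;>
        refine ⟨?_, ?_, ?_⟩ <;> funext i <;> fin_cases i <;>
          simp only [hDval, wx1, wx2, wx3] <;> simp [e1, e2, e3] <;> norm_num
    have eqI' := congrFun (hder e1 e2) 1
    have eqII' := congrFun (hder e1 e2) 2
    have eqIII' := congrFun (hder e1 e3) 1
    have eqV' := congrFun (hder e2 e3) 0
    simp only [hDval] at eqI' eqII' eqIII' eqV'
    simp only [wx1, wx2, wx3] at eqI' eqII' eqIII' eqV'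
    simp [br, e1, e2, e3] at eqI' eqII' eqIII' eqV'
    rcases hη with rfl | rfl
    · have E1 : -4 - c + 4*β - β^2 + α - α*β = 0 := by linear_combination eqI'
      have E2 : 8 + 2*c - 13*β - β*c + 8*β^2 - 2*β^3 - 3*α + 2*α*β + α^2 - α^2*β/2 = 0 := by
        linear_combination eqII'
      have E3 : -5*β - β*c + 6*β^2 - 2*β^3 + 2*α - 4*α*β + α*β^2 + α^2*β/2 = 0 := by
        linear_combination eqIII'
      have E5 : α + α*c + 2*α*β - 2*α*β^2 - 4*α^2 + 3*α^2*β - α^3/2 = 0 := by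
        linear_combination eqV'
      rcases cases_lemma α β c E1 E2 E3 E5 with ⟨hA, hB, hC⟩ | ⟨hA, hB, hC⟩
      · exact Or.inl ⟨hA, hB, hC, finish1 hA hB hC⟩
      · exact Or.inr ⟨hA, hB, hC, finish2 hA hB hC⟩
    · have E1 : -4 - c + 4*(-β) - (-β)^2 + (-α) - (-α)*(-β) = 0 := by linear_combination eqI'
      have E2 : 8 + 2*c - 13*(-β) - (-β)*c + 8*(-β)^2 - 2*(-β)^3 - 3*(-α) + 2*(-α)*(-β)
          + (-α)^2 - (-α)^2*(-β)/2 = 0 := by linear_combination -eqII'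
      have E3 : -5*(-β) - (-β)*c + 6*(-β)^2 - 2*(-β)^3 + 2*(-α) - 4*(-α)*(-β) + (-α)*(-β)^2
          + (-α)^2*(-β)/2 = 0 := by linear_combination -eqIII'
      have E5 : (-α) + (-α)*c + 2*(-α)*(-β) - 2*(-α)*(-β)^2 - 4*(-α)^2 + 3*(-α)^2*(-β)
          - (-α)^3/2 = 0 := by linear_combination -eqV'
      rcases cases_lemma (-α) (-β) c E1 E2 E3 E5 with ⟨hA, hB, hC⟩ | ⟨hA, hB, hC⟩
      · have hA' : α = 0 := by linarith
        have hB' : β = 0 := by linarith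
        exact Or.inl ⟨hA', hB', hC, finish1 hA' hB' hC⟩
      · have hA' : α = 0 := by linarith
        have hB' : β = -1 := by linarith
        exact Or.inr ⟨hA', hB', hC, finish2 hA' hB' hC⟩
  · rintro (⟨rfl, rfl, rfl, h1, h2, h3⟩ | ⟨rfl, rfl, rfl, h1, h2, h3⟩)
    · have hDx : ∀ z : V, D z = ![0, z 1, z 1 * η + z 2 * 2] := by
        intro z
        calc D z = D (z 0 • e1 + z 1 • e2 + z 2 • e3) := by rw [← hxbasis z]
        _ = z 0 • D e1 + z 1 • D e2 + z 2 • D e3 := by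
          rw [map_add, map_add, map_smul, map_smul, map_smul]
        _ = _ := by rw [h1, h2, h3]; funext i; fin_cases i <;> simp [e1, e2, e3] <;> ring
      rcases hη with rfl | rfl <;> constructor
      · intro x y
        simp only [hDx]
        funext i; fin_cases i <;> simp [br, e1, e2, e3] <;> ring
      · intro x
        rw [keyWan x, hDx x]
        funext i; fin_cases i <;> simp only [wx1, wx2, wx3] <;> simp [e1, e2, e3] <;> ring
      · intro x y
        simp only [hDx]
        funext i; fin_cases i <;> simp [br, e1, e2, e3] <;> ring
      · intro x
        rw [keyWan x, hDx x]
        funext i; fin_cases i <;> simp only [wx1, wx2, wx3] <;> simp [e1, e2, e3] <;> ring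
    · have hDx : ∀ z : V, D z = ![0, -(z 1) - z 2 * β, z 1 * β + z 2] := by
        intro z
        calc D z = D (z 0 • e1 + z 1 • e2 + z 2 • e3) := by rw [← hxbasis z]
        _ = z 0 • D e1 + z 1 • D e2 + z 2 • D e3 := by
          rw [map_add, map_add, map_smul, map_smul, map_smul]
        _ = _ := by rw [h1, h2, h3]; funext i; fin_cases i <;> simp [e1, e2, e3] <;> ring
      rcases hη with rfl | rfl <;> constructor
      · intro x y
        simp only [hDx]
        funext i; fin_cases i <;> simp [br, e1, e2, e3] <;> ring
      · intro x
        rw [keyWan x, hDx x]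
        funext i; fin_cases i <;> simp only [wx1, wx2, wx3] <;> simp [e1, e2, e3] <;> ring
      · intro x y
        simp only [hDx]
        funext i; fin_cases i <;> simp [br, e1, e2, e3] <;> ring
      · intro x
        rw [keyWan x, hDx x]
        funext i; fin_cases i <;> simp only [wx1, wx2, wx3] <;> simp [e1, e2, e3] <;> ring
end
end

section
/- Let α, β ∈ ℝ and η ∈ {1, −1}. Then (𝔤₄, g, J) is a second kind algebraic Wanas soliton associated to the canonical connection ∇⁰ if and only if one of the following holds: (i) α = 0, β = η, c = −1, with De₁ = 0, De₂ = −e₂ + ηe₃, De₃ = −ηe₂ + e₃; (ii) α = 0, β = −η, c = −11, with De₁ = 0, De₂ = 7e₂, De₃ = 7e₃. -/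
/-! In the basis `e₁, e₂, e₃` the operator `W̃an⁰` is `p ⊕ [[q, -r], [r, s]]` with `p, q, r, s`
polynomial in `α, β, η`. A soliton forces `D = W̃an⁰ - c • id`, and a map of this block shape
is a derivation exactly when the derivation identity holds on the three basis brackets, i.e.
when four polynomial equations in `α, β, η, c` hold. Up to `e₃ ↦ -e₃` one may take `η = 1`;
then `α = 0` leaves `(β - 1)² (β + 1) = 0`, while `α ≠ 0` forces either `β = 1`, which is
inconsistent, or `α = 3 - β` with `11 β² - 39 β + 38 = 0`, which has no real root. -/

noncomputable section

lemma eq_smul_e1_add_smul_e2_add_smul_e3 (v : V) : v = v 0 • e1 + v 1 • e2 + v 2 • e3 := by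
  ext j; fin_cases j <;> simp [e1, e2, e3]

lemma eq_vec_g_e1_g_e2_neg_g_e3 (v : V) : v = ![g v e1, g v e2, -g v e3] := by
  ext j; fin_cases j <;> simp [g, e1, e2, e3]

lemma LinearMap.apply_eq_smul_add_smul_add_smul (f : V →ₗ[ℝ] V) (v : V) :
    f v = v 0 • f e1 + v 1 • f e2 + v 2 • f e3 := by
  conv_lhs => rw [eq_smul_e1_add_smul_e2_add_smul_e3 v]
  simp only [map_add, map_smul]

theorem forall_apply_eq_smul_add_iff {T D : V →ₗ[ℝ] V} {c p q r s : ℝ}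
    (h1 : T e1 = p • e1) (h2 : T e2 = q • e2 + r • e3) (h3 : T e3 = -(r • e2) + s • e3) :
    (∀ x, T x = c • x + D x) ↔
      D e1 = (p - c) • e1 ∧ D e2 = (q - c) • e2 + r • e3 ∧ D e3 = -(r • e2) + (s - c) • e3 := by
  constructor
  · intro h
    refine ⟨?_, ?_, ?_⟩
    · linear_combination (norm := module) h1 - h e1
    · linear_combination (norm := module) h2 - h e2
    · linear_combination (norm := module) h3 - h e3
  · rintro ⟨d1, d2, d3⟩ x
    rw [T.apply_eq_smul_add_smul_add_smul, D.apply_eq_smul_add_smul_add_smul, h1, h2, h3, d1, d2, d3]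
    ext j; fin_cases j <;> simp [e1, e2, e3] <;> ring

theorem isDeriv_iff_of_apply_basis {α β η P Q S r : ℝ} {D : V →ₗ[ℝ] V}
    (h1 : D e1 = P • e1) (h2 : D e2 = Q • e2 + r • e3) (h3 : D e3 = -(r • e2) + S • e3) :
    IsDeriv α β η D ↔ P = 2 * r * (η - β) ∧ (2 * η - β) * (S - P - Q) = 2 * r ∧
      β * (P + S - Q) = 2 * r ∧ α * (P - Q - S) = 0 := by
  have hD : ∀ x, D x = x 0 • (P • e1) + x 1 • (Q • e2 + r • e3) + x 2 • (-(r • e2) + S • e3) := by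
    intro x; rw [D.apply_eq_smul_add_smul_add_smul, h1, h2, h3]
  simp only [IsDeriv, hD]
  constructor
  · intro h
    have h12_2 := congrFun (h e1 e2) 1
    have h12_3 := congrFun (h e1 e2) 2
    have h13_2 := congrFun (h e1 e3) 1
    have h23_1 := congrFun (h e2 e3) 0
    simp [br, e1, e2, e3] at h12_2 h12_3 h13_2 h23_1
    exact ⟨by linear_combination h12_2, by linear_combination h12_3,
      by linear_combination h13_2, by linear_combination h23_1⟩
  · rintro ⟨E1, E2, E3, E4⟩ x y
    ext j; fin_cases j <;> simp [br, e1, e2, e3]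
    · linear_combination (x 1 * y 2 - x 2 * y 1) * E4
    · linear_combination (x 0 * y 1 - x 1 * y 0) * E1 + (x 0 * y 2 - x 2 * y 0) * E3
    · linear_combination (x 0 * y 1 - x 1 * y 0) * E2 - (x 0 * y 2 - x 2 * y 0) * E1

-- `wanasᵢⱼ` is the `eᵢ`-component of `W̃an⁰ eⱼ`.
def wanas₁₁ (α β η : ℝ) : ℝ := -2 - 2*η^2 + 5*β*η - 2*β^2 - α*η + α*β/2
def wanas₂₂ (α β η : ℝ) : ℝ := -1 - 2*η^2 + β*η + 3*α*η - 3*α*β/2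
def wanas₃₂ (α β η : ℝ) : ℝ := η/2 + β/2 - 3*α/4
def wanas₃₃ (α β η : ℝ) : ℝ := -2*η^2 + 2*β*η - α*β + α^2/2

section Wanas

variable {α β η : ℝ} {tWan : V →ₗ[ℝ] V}

lemma wanas_apply_eq (htWan : ∀ x y, wt α β η x y = g (tWan x) y) (x : V) :
    tWan x = ![wt α β η x e1, wt α β η x e2, -wt α β η x e3] := by
  simp only [htWan, ← eq_vec_g_e1_g_e2_neg_g_e3]

lemma wanas_apply_e1 (htWan : ∀ x y, wt α β η x y = g (tWan x) y) :
    tWan e1 = wanas₁₁ α β η • e1 := by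
  rw [wanas_apply_eq htWan]; ext j; fin_cases j <;>
    simp [wt, w, W, Rc, A, T, nab, br, g, e1, e2, e3, wanas₁₁]
  ring

lemma wanas_apply_e2 (htWan : ∀ x y, wt α β η x y = g (tWan x) y) :
    tWan e2 = wanas₂₂ α β η • e2 + wanas₃₂ α β η • e3 := by
  rw [wanas_apply_eq htWan]; ext j; fin_cases j <;>
    simp [wt, w, W, Rc, A, T, nab, br, g, e1, e2, e3, wanas₂₂, wanas₃₂] <;> ring

-- The (2,3) entry is minus the (3,2) entry because `W̃an⁰` is `g`-self-adjoint.
lemma wanas_apply_e3 (htWan : ∀ x y, wt α β η x y = g (tWan x) y) :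
    tWan e3 = -(wanas₃₂ α β η • e2) + wanas₃₃ α β η • e3 := by
  rw [wanas_apply_eq htWan]; ext j; fin_cases j <;>
    simp [wt, w, W, Rc, A, T, nab, br, g, e1, e2, e3, wanas₃₂, wanas₃₃] <;> ring

end Wanas

def WanasSolitonEquations (α β η c : ℝ) : Prop :=
  let P := wanas₁₁ α β η - c
  let Q := wanas₂₂ α β η - c
  let S := wanas₃₃ α β η - c
  let r := wanas₃₂ α β η
  P = 2 * r * (η - β) ∧ (2 * η - β) * (S - P - Q) = 2 * r ∧
    β * (P + S - Q) = 2 * r ∧ α * (P - Q - S) = 0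

theorem wanasSolitonEquations_one_iff {a b c : ℝ} :
    WanasSolitonEquations a b 1 c ↔ (a = 0 ∧ b = 1 ∧ c = -1) ∨ (a = 0 ∧ b = -1 ∧ c = -11) := by
  constructor
  · rintro ⟨E1, E2, E3, E4⟩
    simp only [wanas₁₁, wanas₂₂, wanas₃₂, wanas₃₃] at E1 E2 E3 E4
    have hc : c = -5 + 5*b - b^2 + a/2 - a*b := by linear_combination -E1
    have F1 : -1 + b + b^2 - b^3 - 3/2*a - 1/2*a*b + a*b^2 + a^2 - 1/2*a^2*b = 0 := by
      linear_combination E2 - (2 - b) * hc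
    have F2 : -1 + b + b^2 - b^3 + 3/2*a - 9/2*a*b + 2*a*b^2 + 1/2*a^2*b = 0 := by
      linear_combination E3 + b * hc
    have G : a * (-4 + 7*b - 3*b^2 - 7/2*a + 2*a*b - 1/2*a^2) = 0 := by
      linear_combination E4 - a * hc
    rcases eq_or_ne a 0 with rfl | ha
    · have hb : (b - 1) ^ 2 * (b + 1) = 0 := by linear_combination -F1
      obtain rfl | rfl : b = 1 ∨ b = -1 := by
        rcases mul_eq_zero.1 hb with hb | hb
        · exact Or.inl (sub_eq_zero.1 (pow_eq_zero_iff two_ne_zero |>.1 hb))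
        · exact Or.inr (eq_neg_of_add_eq_zero_left hb)
      · exact Or.inl ⟨rfl, rfl, by linear_combination hc⟩
      · exact Or.inr ⟨rfl, rfl, by linear_combination hc⟩
    · exfalso
      have G' := (mul_eq_zero.1 G).resolve_left ha
      have hab : a * ((1 - b) * (a - 3 + b)) = 0 := by linear_combination F1 - F2
      rcases mul_eq_zero.1 ((mul_eq_zero.1 hab).resolve_left ha) with hb | hab
      · obtain rfl : b = 1 := by linarith
        exact ha (by linear_combination -(2 / 5) * (G' + F1))
      · obtain rfl : a = 3 - b := by linarith
        have : (22 * b - 39) ^ 2 + 151 = 0 := by linear_combination -88 * G'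
        linarith [sq_nonneg (22 * b - 39)]
  · rintro (⟨rfl, rfl, rfl⟩ | ⟨rfl, rfl, rfl⟩) <;>
      norm_num [WanasSolitonEquations, wanas₁₁, wanas₂₂, wanas₃₂, wanas₃₃]

-- `e₃ ↦ -e₃` identifies the Lie algebra with parameters `(α, β, η)` with the one for `(-α, -β, -η)`.
theorem wanasSolitonEquations_neg_one_iff {α β c : ℝ} :
    WanasSolitonEquations α β (-1) c ↔ WanasSolitonEquations (-α) (-β) 1 c := by
  simp only [WanasSolitonEquations, wanas₁₁, wanas₂₂, wanas₃₂, wanas₃₃]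
  constructor <;> rintro ⟨E1, E2, E3, E4⟩ <;>
    exact ⟨by linear_combination E1, by linear_combination -E2,
      by linear_combination -E3, by linear_combination -E4⟩

theorem wanasSolitonEquations_iff {α β η c : ℝ} (hη : η = 1 ∨ η = -1) :
    WanasSolitonEquations α β η c ↔ (α = 0 ∧ β = η ∧ c = -1) ∨ (α = 0 ∧ β = -η ∧ c = -11) := by
  rcases hη with rfl | rfl
  · exact wanasSolitonEquations_one_iff
  · rw [wanasSolitonEquations_neg_one_iff, wanasSolitonEquations_one_iff]
    simp only [neg_eq_iff_eq_neg, neg_zero, neg_neg]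

theorem isDeriv_and_wanas_eq_smul_add_iff {α β η c : ℝ} {tWan D : V →ₗ[ℝ] V}
    (htWan : ∀ x y, wt α β η x y = g (tWan x) y) :
    (IsDeriv α β η D ∧ ∀ x, tWan x = c • x + D x) ↔ WanasSolitonEquations α β η c ∧
      D e1 = (wanas₁₁ α β η - c) • e1 ∧ D e2 = (wanas₂₂ α β η - c) • e2 + wanas₃₂ α β η • e3 ∧
      D e3 = -(wanas₃₂ α β η • e2) + (wanas₃₃ α β η - c) • e3 := by
  rw [forall_apply_eq_smul_add_iff (wanas_apply_e1 htWan) (wanas_apply_e2 htWan)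
    (wanas_apply_e3 htWan)]
  constructor
  · rintro ⟨hD, hD1, hD2, hD3⟩
    exact ⟨(isDeriv_iff_of_apply_basis hD1 hD2 hD3).1 hD, hD1, hD2, hD3⟩
  · rintro ⟨heq, hD1, hD2, hD3⟩
    exact ⟨(isDeriv_iff_of_apply_basis hD1 hD2 hD3).2 heq, hD1, hD2, hD3⟩

lemma wanas_zero_self {η : ℝ} (hη : η ^ 2 = 1) :
    wanas₁₁ 0 η η = -1 ∧ wanas₂₂ 0 η η = -2 ∧ wanas₃₂ 0 η η = η ∧ wanas₃₃ 0 η η = 0 := by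
  simp only [wanas₁₁, wanas₂₂, wanas₃₂, wanas₃₃]
  exact ⟨by linear_combination hη, by linear_combination -hη, by ring, by ring⟩

lemma wanas_zero_neg_self {η : ℝ} (hη : η ^ 2 = 1) :
    wanas₁₁ 0 (-η) η = -11 ∧ wanas₂₂ 0 (-η) η = -4 ∧ wanas₃₂ 0 (-η) η = 0 ∧
      wanas₃₃ 0 (-η) η = -4 := by
  simp only [wanas₁₁, wanas₂₂, wanas₃₂, wanas₃₃]
  exact ⟨by linear_combination -9 * hη, by linear_combination -3 * hη, by ring,
    by linear_combination -4 * hη⟩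

theorem g4_second_kind_algebraic_Wanas_soliton (α β η : ℝ) (hη : η = 1 ∨ η = -1)
    (tWan : V →ₗ[ℝ] V) (htWan : ∀ x y, wt α β η x y = g (tWan x) y)
    (c : ℝ) (D : V →ₗ[ℝ] V) :
    (IsDeriv α β η D ∧ ∀ x, tWan x = c • x + D x) ↔
      (α = 0 ∧ β = η ∧ c = -1 ∧
        D e1 = 0 ∧ D e2 = -e2 + η • e3 ∧ D e3 = -(η • e2) + e3) ∨
      (α = 0 ∧ β = -η ∧ c = -11 ∧
        D e1 = 0 ∧ D e2 = (7 : ℝ) • e2 ∧ D e3 = (7 : ℝ) • e3) := by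
  have hη2 : η ^ 2 = 1 := by rcases hη with rfl | rfl <;> norm_num
  obtain ⟨h₁₁, h₂₂, h₃₂, h₃₃⟩ := wanas_zero_self hη2
  obtain ⟨k₁₁, k₂₂, k₃₂, k₃₃⟩ := wanas_zero_neg_self hη2
  rw [isDeriv_and_wanas_eq_smul_add_iff htWan, wanasSolitonEquations_iff hη]
  constructor
  · rintro ⟨⟨rfl, rfl, rfl⟩ | ⟨rfl, rfl, rfl⟩, hD⟩
    · exact Or.inl ⟨rfl, rfl, rfl, by norm_num [h₁₁, h₂₂, h₃₂, h₃₃] at hD; exact hD⟩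
    · exact Or.inr ⟨rfl, rfl, rfl, by norm_num [k₁₁, k₂₂, k₃₂, k₃₃] at hD; exact hD⟩
  · rintro (⟨rfl, rfl, rfl, hD⟩ | ⟨rfl, rfl, rfl, hD⟩)
    · exact ⟨Or.inl ⟨rfl, rfl, rfl⟩, by norm_num [h₁₁, h₂₂, h₃₂, h₃₃, hD]⟩
    · exact ⟨Or.inr ⟨rfl, rfl, rfl⟩, by norm_num [k₁₁, k₂₂, k₃₂, k₃₃, hD]⟩
end
end
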